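/- arXiv:1707.09388 — 2 statements merged into one kernel-verified Lean document; each statement's English description precedes it below -/
import Mathlib

section
/- Let Σ_t be a smooth IMCF solution of compact connected surfaces in M³ with R ≥ −6. Then m_H(Σ_t) (16π)^{3/2}/(2|Σ_t|^{1/2}) ≥ d/dt ∫_{Σ_t}(H² − 4) dμ + ∫_{Σ_t} ( 2|∇H|²/H² + (1/2)(λ₁−λ₂)² + R + 6 ) dμ. -/
open Real MeasureTheory

/-! The two integrands on the right-hand side sum pointwise to `2 - H²/2`, so after integrating
the right-hand side is `4πχ - ½∫H² + 2|Σ|`. The Hawking mass normalisation turns the left-hand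
side into `(16π - ∫(H² - 4))/2 = 8π - ½∫H² + 2|Σ|`, and the estimate reduces to `χ ≤ 2`. -/

theorem sqrt_div_cube_mul_mul_rpow_div {a c : ℝ} (ha : 0 < a) (hc : 0 < c) (x : ℝ) :
    √(a / c ^ 3) * x * c ^ ((3 : ℝ) / 2) / (2 * √a) = x / 2 := by
  have hc32 : c ^ ((3 : ℝ) / 2) = √(c ^ 3) := by
    rw [sqrt_eq_rpow, ← rpow_natCast c 3, ← rpow_mul hc.le]
    norm_num
  have hsqrt_c : 0 < √(c ^ 3) := sqrt_pos.mpr (by positivity)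
  have hsqrt_a : 0 < √a := sqrt_pos.mpr ha
  rw [sqrt_div ha.le, hc32]
  field_simp

section Integrals

variable {S : Type*} [MeasurableSpace S] {μ : Measure S} [IsFiniteMeasure μ]

theorem integral_sub_const_eq {f : S → ℝ} (hf : Integrable f μ) (c : ℝ) :
    ∫ x, (f x - c) ∂μ = ∫ x, f x ∂μ - μ.real Set.univ * c := by
  rw [integral_sub hf (integrable_const c), integral_const, smul_eq_mul]

theorem integral_neg_sub_const_mul_add_const {f h : S → ℝ} (hf : Integrable f μ)
    (hh : Integrable h μ) (a c : ℝ) :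
    ∫ x, (-f x - a * h x + c) ∂μ = -∫ x, f x ∂μ - a * ∫ x, h x ∂μ + μ.real Set.univ * c := by
  have hf' : Integrable (fun x => -f x) μ := hf.neg
  have hh' : Integrable (fun x => a * h x) μ := hh.const_mul a
  have hfh : Integrable (fun x => -f x - a * h x) μ := hf'.sub hh'
  rw [integral_add hfh (integrable_const c), integral_sub hf' hh', integral_neg,
    integral_const_mul, integral_const, smul_eq_mul]

end Integrals

theorem crucial_hawking_estimate_general {S : Type*} [MeasurableSpace S]
    (μ : Measure S) [IsFiniteMeasure μ] (χ : ℤ) (area mH Q' : ℝ)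
    (H gradH2 R lam1 lam2 : S → ℝ)
    (harea : area = (μ Set.univ).toReal) (hareapos : 0 < area)
    (hχ : χ ≤ 2)
    (hQ' : Q' = 4 * π * (χ : ℝ) +
      ∫ x, (-2 * gradH2 x / (H x) ^ 2 - (1 / 2) * (lam1 x - lam2 x) ^ 2 - R x
        - (1 / 2) * (H x) ^ 2 - 4) ∂μ)
    (hmH : mH = Real.sqrt (area / (16 * π) ^ 3) * (16 * π - ∫ x, ((H x) ^ 2 - 4) ∂μ))
    (hint1 : Integrable (fun x => gradH2 x / (H x) ^ 2) μ)
    (hint2 : Integrable (fun x => (lam1 x - lam2 x) ^ 2) μ)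
    (hint3 : Integrable R μ) (hint4 : Integrable (fun x => (H x) ^ 2) μ) :
    mH * (16 * π) ^ ((3 : ℝ) / 2) / (2 * Real.sqrt area) ≥
      Q' + ∫ x, (2 * gradH2 x / (H x) ^ 2 + (1 / 2) * (lam1 x - lam2 x) ^ 2
        + R x + 6) ∂μ := by
  rw [← measureReal_def] at harea
  set B := fun x => 2 * gradH2 x / (H x) ^ 2 + (1 / 2) * (lam1 x - lam2 x) ^ 2 + R x + 6
  have hB : Integrable B μ := by
    simp_rw [B, mul_div_assoc]
    fun_prop
  have hQ'_eq : Q' = 4 * π * χ + ∫ x, (-B x - (1 / 2) * (H x) ^ 2 + 2) ∂μ := by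
    rw [hQ']
    congr 2
    ext x
    simp only [B]
    ring
  rw [integral_neg_sub_const_mul_add_const hB hint4, ← harea] at hQ'_eq
  have hLHS : mH * (16 * π) ^ ((3 : ℝ) / 2) / (2 * √area)
      = (16 * π - (∫ x, (H x) ^ 2 ∂μ - area * 4)) / 2 := by
    rw [hmH, sqrt_div_cube_mul_mul_rpow_div hareapos (by positivity),
      integral_sub_const_eq hint4, harea]
  have hχ' : (χ : ℝ) ≤ 2 := by exact_mod_cast hχ
  rw [ge_iff_le, hLHS, hQ'_eq]
  linarith [mul_le_mul_of_nonneg_left hχ' pi_pos.le]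

/-- Crucial pointwise estimate: for a compact connected `Σ_t` (`χ(Σ_t) ≤ 2`) in `M³`
with `R ≥ −6`, combining the evolution identity
`d/dt ∫(H²−4)dμ = 4πχ + ∫(−2|∇H|²/H² − (1/2)(λ₁−λ₂)² − R − (1/2)H² − 4)dμ`
with the Hawking mass `m_H = √(|Σ_t|/(16π)³)(16π − ∫(H²−4)dμ)` gives
`m_H (16π)^{3/2}/(2|Σ_t|^{1/2}) ≥ d/dt ∫(H²−4)dμ + ∫(2|∇H|²/H² + (1/2)(λ₁−λ₂)² + R + 6)dμ`. -/
theorem crucial_hawking_estimate {S : Type*} [MeasurableSpace S]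
    (μ : Measure S) [IsFiniteMeasure μ] (χ : ℤ) (area mH Q' : ℝ)
    (H gradH2 R lam1 lam2 : S → ℝ)
    (harea : area = (μ Set.univ).toReal) (hareapos : 0 < area)
    (hχ : χ ≤ 2) (hR : ∀ x, -6 ≤ R x)
    (hQ' : Q' = 4 * π * (χ : ℝ) +
      ∫ x, (-2 * gradH2 x / (H x) ^ 2 - (1 / 2) * (lam1 x - lam2 x) ^ 2 - R x
        - (1 / 2) * (H x) ^ 2 - 4) ∂μ)
    (hmH : mH = Real.sqrt (area / (16 * π) ^ 3) * (16 * π - ∫ x, ((H x) ^ 2 - 4) ∂μ))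
    (hint1 : Integrable (fun x => gradH2 x / (H x) ^ 2) μ)
    (hint2 : Integrable (fun x => (lam1 x - lam2 x) ^ 2) μ)
    (hint3 : Integrable R μ) (hint4 : Integrable (fun x => (H x) ^ 2) μ) :
    mH * (16 * π) ^ ((3 : ℝ) / 2) / (2 * Real.sqrt area) ≥
      Q' + ∫ x, (2 * gradH2 x / (H x) ^ 2 + (1 / 2) * (lam1 x - lam2 x) ^ 2
        + R x + 6) ∂μ :=
  crucial_hawking_estimate_general μ χ area mH Q' H gradH2 R lam1 lam2 harea hareapos hχ hQ' hmH
    hint1 hint2 hint3 hint4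
end

section
/- Suppose a sequence of IMCF solutions Σ_t^i satisfies: for a.e. t ∈ [0,T], ∫_{Σ_t^i}(2|∇H_i|²/H_i² + (λ₁^i − λ₂^i)² + R^i + 6) dμ → 0, ∫_{Σ_t^i}(H_i² − 4)dμ → 16π, and d/dt ∫_{Σ_t^i}(H_i² − 4)dμ → 0. Then for a.e. t, ∫_{Σ_t^i}(Rc^i(ν,ν) + 2) dμ → 0 and ∫_{Σ_t^i}(K₁₂^i + 1) dμ → 0, where K₁₂ = (R − 2Rc(ν,ν))/2 is the ambient sectional curvature tangent to Σ_t. -/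
/-! Nonnegative terms of a sum tending to zero tend to zero themselves, so `G`, `L` and `S`
vanish in the limit; the evolution identity and the algebraic identity then express
`RcInt` and `KInt` as linear combinations of sequences tending to zero. -/

open Real Filter Topology

theorem tendsto_zero_of_add_tendsto_zero_of_nonneg {α : Type*} {l : Filter α} {f g : α → ℝ}
    (hf : ∀ a, 0 ≤ f a) (hg : ∀ a, 0 ≤ g a) (h : Tendsto (fun a => f a + g a) l (𝓝 0)) :
    Tendsto f l (𝓝 0) ∧ Tendsto g l (𝓝 0) :=
  ⟨squeeze_zero hf (fun a => le_add_of_nonneg_right (hg a)) h,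
    squeeze_zero hg (fun a => le_add_of_nonneg_left (hf a)) h⟩

theorem ricci_and_sectional_integrals_to_zero_general
    (G L S c RcInt KInt : ℕ → ℝ)
    (hG : ∀ i, 0 ≤ G i) (hL : ∀ i, 0 ≤ L i) (hS : ∀ i, 0 ≤ S i)
    (hsum : Tendsto (fun i => G i + L i + S i) atTop (nhds 0))
    (hc : Tendsto c atTop (nhds 0))
    (hevol : ∀ i, c i = -G i - L i - 2 * RcInt i)
    (halg : ∀ i, KInt i = (1 / 2) * S i - RcInt i) :
    Tendsto RcInt atTop (nhds 0) ∧ Tendsto KInt atTop (nhds 0) := by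
  obtain ⟨hGL, hS0⟩ :=
    tendsto_zero_of_add_tendsto_zero_of_nonneg (fun i => add_nonneg (hG i) (hL i)) hS hsum
  obtain ⟨hG0, hL0⟩ := tendsto_zero_of_add_tendsto_zero_of_nonneg hG hL hGL
  have hRc : Tendsto RcInt atTop (𝓝 0) := by
    have hlim := ((hc.add hG0).add hL0).neg.div_const 2
    rw [add_zero, add_zero, neg_zero, zero_div] at hlim
    exact hlim.congr fun i => by linarith [hevol i]
  have hK : Tendsto KInt atTop (𝓝 0) := by
    have hlim := (hS0.const_mul (1 / 2)).sub hRc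
    rw [mul_zero, sub_zero] at hlim
    exact hlim.congr fun i => (halg i).symm
  exact ⟨hRc, hK⟩

/-- At a (fixed, a.e.) time `t`, write for the sequence of IMCF solutions:
`G i = ∫ 2|∇H_i|²/H_i²`, `L i = ∫ (λ₁^i−λ₂^i)²`, `S i = ∫ (R^i+6)` (all nonnegative,
since `R ≥ −6`), `b i = ∫ (H_i²−4)`, `c i = d/dt ∫ (H_i²−4)`,
`RcInt i = ∫ (Rc^i(ν,ν)+2)`, `KInt i = ∫ (K₁₂^i+1)`.  The evolution identity gives
`c i = −G i − L i − 2 RcInt i` and the algebraic identity `K₁₂+1 = (1/2)(R+6) −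
(Rc(ν,ν)+2)` gives `KInt i = (1/2) S i − RcInt i`.  If `G + L + S → 0`, `b → 16π`
and `c → 0`, then `RcInt → 0` and `KInt → 0`. -/
theorem ricci_and_sectional_integrals_to_zero
    (G L S b c RcInt KInt : ℕ → ℝ)
    (hG : ∀ i, 0 ≤ G i) (hL : ∀ i, 0 ≤ L i) (hS : ∀ i, 0 ≤ S i)
    (hsum : Tendsto (fun i => G i + L i + S i) atTop (nhds 0))
    (hb : Tendsto b atTop (nhds (16 * π)))
    (hc : Tendsto c atTop (nhds 0))
    (hevol : ∀ i, c i = -G i - L i - 2 * RcInt i)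
    (halg : ∀ i, KInt i = (1 / 2) * S i - RcInt i) :
    Tendsto RcInt atTop (nhds 0) ∧ Tendsto KInt atTop (nhds 0) :=
  ricci_and_sectional_integrals_to_zero_general G L S c RcInt KInt hG hL hS hsum hc hevol halg
end
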